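/- arXiv:2107.10323 — 3 statements merged into one kernel-verified Lean document; each statement's English description precedes it below -/
import Mathlib

section
/- Induction step of Lemma 6 (existence of the ironing parameter γ): Let λ be a nonnegative downward matrix (λ_ji ≥ 0 for all j ∈ {1,…,n}, i ∈ {0,1,…,n}, and λ_ji > 0 with j,i ∈ {1,…,n} implies j > i), let i ∈ {1,…,n} and k ∈ {1,…,d}. Then the map γ ↦ R_i^{λ'(γ),k} is affine in γ, with R_i^{λ'(1),k} = R_i^{λ,k} and R_i^{λ'(0),k} = R_{i+1}^{λ,k} + f_i θ_i^k. Consequently, for every real number c lying between R_i^{λ,k} and R_{i+1}^{λ,k} + f_i θ_i^k, there exists γ ∈ [0,1] such that R_i^{λ'(γ),k} = c. -/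
open Finset

noncomputable section

/-! Common setup: a multiproduct monopoly with `d` goods (indexed `1,…,d`) and `n` buyer
types (indexed `1,…,n`, with `0` the outside option).  All vectors over goods/types are
encoded as functions `ℕ → ℝ`. -/

/-- Inner product `⟨x, y⟩ = ∑_{k=1}^d x_k y_k` over the goods `1,…,d`. -/
def dot (d : ℕ) (x y : ℕ → ℝ) : ℝ := ∑ k ∈ Finset.Icc 1 d, x k * y k

/-- `f` is a probability vector on types `1,…,n`. -/
def IsProb (n : ℕ) (f : ℕ → ℝ) : Prop :=
  (∀ i ∈ Finset.Icc 1 n, 0 < f i) ∧ ∑ i ∈ Finset.Icc 1 n, f i = 1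

/-- Cumulative distribution `F_i = ∑_{j=1}^i f_j` (so `F_0 = 0`). -/
def Fc (f : ℕ → ℝ) (i : ℕ) : ℝ := ∑ j ∈ Finset.Icc 1 i, f j

/-- `(q,t)` is a mechanism: `(q_0,t_0) = (0,0)` and `q_i ∈ [0,1]^d` for `i ∈ {1,…,n}`. -/
def IsMechanism (d n : ℕ) (q : ℕ → ℕ → ℝ) (t : ℕ → ℝ) : Prop :=
  (∀ k ∈ Finset.Icc 1 d, q 0 k = 0) ∧ t 0 = 0 ∧
    ∀ i ∈ Finset.Icc 1 n, ∀ k ∈ Finset.Icc 1 d, 0 ≤ q i k ∧ q i k ≤ 1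

/-- Incentive compatibility and individual rationality:
`⟨q_j, θ_j⟩ − t_j ≥ ⟨q_i, θ_j⟩ − t_i` for all `j ∈ {1,…,n}`, `i ∈ {0,…,n}`. -/
def ICIR (d n : ℕ) (θ : ℕ → ℕ → ℝ) (q : ℕ → ℕ → ℝ) (t : ℕ → ℝ) : Prop :=
  ∀ j ∈ Finset.Icc 1 n, ∀ i ∈ Finset.Icc 0 n,
    dot d (q j) (θ j) - t j ≥ dot d (q i) (θ j) - t i

/-- Expected revenue `∑_{i=1}^n f_i t_i`. -/
def revenue (n : ℕ) (f t : ℕ → ℝ) : ℝ := ∑ i ∈ Finset.Icc 1 n, f i * t i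

/-- A mechanism is optimal if it is an IC-IR mechanism whose revenue is at least that of
every IC-IR mechanism. -/
def Optimal (d n : ℕ) (θ : ℕ → ℕ → ℝ) (f : ℕ → ℝ) (q : ℕ → ℕ → ℝ) (t : ℕ → ℝ) : Prop :=
  IsMechanism d n q t ∧ ICIR d n θ q t ∧
    ∀ q' : ℕ → ℕ → ℝ, ∀ t' : ℕ → ℝ, IsMechanism d n q' t' → ICIR d n θ q' t' →
      revenue n f t' ≤ revenue n f t

/-- Upgrade pricing: `{q_0, q_1, …, q_n}` is totally ordered in the componentwise order. -/
def UpgradePricing (d n : ℕ) (q : ℕ → ℕ → ℝ) : Prop :=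
  ∀ i ∈ Finset.Icc 0 n, ∀ j ∈ Finset.Icc 0 n,
    (∀ k ∈ Finset.Icc 1 d, q i k ≤ q j k) ∨ (∀ k ∈ Finset.Icc 1 d, q j k ≤ q i k)

/-- `k`-th coordinate of the virtual value of type `i` under multipliers `lam`:
`φ_i^λ = θ_i − (1/f_i) ∑_{j=1}^n λ_{ji} (θ_j − θ_i)`. -/
def virt (n : ℕ) (θ : ℕ → ℕ → ℝ) (f : ℕ → ℝ) (lam : ℕ → ℕ → ℝ) (i k : ℕ) : ℝ :=
  θ i k - (1 / f i) * ∑ j ∈ Finset.Icc 1 n, lam j i * (θ j k - θ i k)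

/-- Nonnegativity of the multipliers `λ_{ji}`, `j ∈ {1,…,n}`, `i ∈ {0,…,n}`. -/
def NonnegLam (n : ℕ) (lam : ℕ → ℕ → ℝ) : Prop :=
  ∀ j ∈ Finset.Icc 1 n, ∀ i ∈ Finset.Icc 0 n, 0 ≤ lam j i

/-- Flow conservation: `f_i = ∑_{j=0}^n λ_{ij} − ∑_{j=1}^n λ_{ji}` for all `i ∈ {1,…,n}`. -/
def FlowConservation (n : ℕ) (f : ℕ → ℝ) (lam : ℕ → ℕ → ℝ) : Prop :=
  ∀ i ∈ Finset.Icc 1 n,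
    f i = ∑ j ∈ Finset.Icc 0 n, lam i j - ∑ j ∈ Finset.Icc 1 n, lam j i

/-- A flow is downward if `λ_{ji} > 0` with `j, i ∈ {1,…,n}` implies `j > i`. -/
def Downward (n : ℕ) (lam : ℕ → ℕ → ℝ) : Prop :=
  ∀ j ∈ Finset.Icc 1 n, ∀ i ∈ Finset.Icc 1 n, 0 < lam j i → i < j

/-- `q'` is a feasible allocation: `q'_i ∈ [0,1]^d` for `i ∈ {1,…,n}`. -/
def InUnitCube (d n : ℕ) (q : ℕ → ℕ → ℝ) : Prop :=
  ∀ i ∈ Finset.Icc 1 n, ∀ k ∈ Finset.Icc 1 d, 0 ≤ q i k ∧ q i k ≤ 1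

/-- Virtual welfare `∑_{i=1}^n f_i ⟨q_i, φ_i⟩` of an allocation `q` for virtual values `phi`. -/
def vw (d n : ℕ) (f : ℕ → ℝ) (phi : ℕ → ℕ → ℝ) (q : ℕ → ℕ → ℝ) : ℝ :=
  ∑ i ∈ Finset.Icc 1 n, f i * ∑ k ∈ Finset.Icc 1 d, q i k * phi i k

/-- Initial (Myersonian) virtual values: `φ_i = θ_i − ((1 − F_i)/f_i)(θ_{i+1} − θ_i)` for
`i < n`, and `φ_n = θ_n`. -/
def initVirt (n : ℕ) (θ : ℕ → ℕ → ℝ) (f : ℕ → ℝ) (i k : ℕ) : ℝ :=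
  if i < n then θ i k - ((1 - Fc f i) / f i) * (θ (i + 1) k - θ i k) else θ i k

/-- Pseudo-revenues `R_i^k = (1 − F_{i−1}) θ_i^k` for `i ∈ {1,…,n}`, with `R_{n+1}^k = 0`. -/
def pseudoRev (n : ℕ) (θ : ℕ → ℕ → ℝ) (f : ℕ → ℝ) (i k : ℕ) : ℝ :=
  if i ≤ n then (1 - Fc f (i - 1)) * θ i k else 0

/-- The cutoff allocation: `q_i^k = 1` iff `i ≥ i^k`. -/
def cutAlloc (cut : ℕ → ℕ) : ℕ → ℕ → ℝ := fun i k => if cut k ≤ i then 1 else 0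

/-- The instance is weakly monotone w.r.t. cutoffs `cut`:
`θ_i^k ≤ θ_j^k` whenever `i ≤ i^k ≤ j`. -/
def WeaklyMonotone (d n : ℕ) (θ : ℕ → ℕ → ℝ) (cut : ℕ → ℕ) : Prop :=
  ∀ k ∈ Finset.Icc 1 d, ∀ i ∈ Finset.Icc 1 n, ∀ j ∈ Finset.Icc 1 n,
    i ≤ cut k → cut k ≤ j → θ i k ≤ θ j k

/-- The instance is regular w.r.t. cutoffs `cut`:
`φ_i^k ≤ 0 ≤ φ_j^k` whenever `i ≤ i^k ≤ j`. -/
def Regular (d n : ℕ) (θ : ℕ → ℕ → ℝ) (f : ℕ → ℝ) (cut : ℕ → ℕ) : Prop :=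
  ∀ k ∈ Finset.Icc 1 d, ∀ i ∈ Finset.Icc 1 n, ∀ j ∈ Finset.Icc 1 n,
    i ≤ cut k → cut k ≤ j → initVirt n θ f i k ≤ 0 ∧ 0 ≤ initVirt n θ f j k

/-- Monotone types: `θ_i^k ≤ θ_j^k` for all `i ≤ j` and all goods `k`. -/
def MonotoneTypes (d n : ℕ) (θ : ℕ → ℕ → ℝ) : Prop :=
  ∀ i ∈ Finset.Icc 1 n, ∀ j ∈ Finset.Icc 1 n, i ≤ j → ∀ k ∈ Finset.Icc 1 d, θ i k ≤ θ j k

/-- Monotone marginal rates of substitution: all values are positive and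
`θ_i^l / θ_i^k ≤ θ_j^l / θ_j^k` whenever `i ≤ j` and `k ≤ l`. -/
def MonotoneMRS (d n : ℕ) (θ : ℕ → ℕ → ℝ) : Prop :=
  (∀ i ∈ Finset.Icc 1 n, ∀ k ∈ Finset.Icc 1 d, 0 < θ i k) ∧
    ∀ i ∈ Finset.Icc 1 n, ∀ j ∈ Finset.Icc 1 n, i ≤ j →
      ∀ k ∈ Finset.Icc 1 d, ∀ l ∈ Finset.Icc 1 d, k ≤ l →
        θ i l / θ i k ≤ θ j l / θ j k

/-- The initial flow `λ̂_{ji} = 1 − F_i` if `j = i + 1`, and `0` otherwise. -/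
def lamHat (f : ℕ → ℝ) : ℕ → ℕ → ℝ := fun j i => if j = i + 1 then 1 - Fc f i else 0

/-- Extended cutoffs: `i^0 = 1` and `i^{d+1} = n`. -/
def extCut (n d : ℕ) (cut : ℕ → ℕ) (k : ℕ) : ℕ :=
  if k = 0 then 1 else if k ≤ d then cut k else n

/-- The ironing update `λ'(γ)` of `lam` at type `i`:
`λ'_{ji} = γ λ_{ji}` and `λ'_{j(i−1)} = λ_{j(i−1)} + (1−γ) λ_{ji}` for `j > i`;
`λ'_{i(i−1)} = λ_{i(i−1)} − (1−γ) ∑_{j=i+1}^n λ_{ji}`; other entries unchanged. -/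
def ironUpdate (n : ℕ) (lam : ℕ → ℕ → ℝ) (i : ℕ) (γ : ℝ) : ℕ → ℕ → ℝ :=
  fun j r =>
    if i < j ∧ r = i then γ * lam j i
    else if i < j ∧ r = i - 1 then lam j (i - 1) + (1 - γ) * lam j i
    else if j = i ∧ r = i - 1 then
      lam i (i - 1) - (1 - γ) * ∑ j' ∈ Finset.Icc (i + 1) n, lam j' i
    else lam j r

/-- Pseudo-revenue associated to a flow: `R_i^{λ,k} = ∑_{j=i}^n f_j φ_j^{λ,k}`
(so `R_{n+1}^{λ,k} = 0`). -/
def flowRev (n : ℕ) (θ : ℕ → ℕ → ℝ) (f : ℕ → ℝ) (lam : ℕ → ℕ → ℝ) (i k : ℕ) : ℝ :=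
  ∑ j ∈ Finset.Icc i n, f j * virt n θ f lam j k

/-- A finite sequence `(R_i)_{i=1}^n` is quasi-concave: for some `i' ∈ {1,…,n}`,
`R_i ≥ R_j` whenever `i' ≤ i ≤ j` or `j ≤ i ≤ i'` (indices in `{1,…,n}`). -/
def QuasiConcaveSeq (n : ℕ) (R : ℕ → ℝ) : Prop :=
  ∃ i' ∈ Finset.Icc 1 n, ∀ i ∈ Finset.Icc 1 n, ∀ j ∈ Finset.Icc 1 n,
    ((i' ≤ i ∧ i ≤ j) ∨ (j ≤ i ∧ i ≤ i')) → R j ≤ R i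

/-- `Rbar` is the quasi-concave closure of `R` on `{1,…,n}`: the pointwise smallest
quasi-concave sequence dominating `R`. -/
def IsQCClosure (n : ℕ) (R Rbar : ℕ → ℝ) : Prop :=
  QuasiConcaveSeq n Rbar ∧ (∀ i ∈ Finset.Icc 1 n, R i ≤ Rbar i) ∧
    ∀ S : ℕ → ℝ, QuasiConcaveSeq n S → (∀ i ∈ Finset.Icc 1 n, R i ≤ S i) →
      ∀ i ∈ Finset.Icc 1 n, Rbar i ≤ S i

/-- `{a,…,b}` is a candidate ironing interval for the sequence `R` with closure `Rbar`:
an inclusion-maximal contiguous set of indices where `Rbar ≠ R`. -/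
def CandInterval (n : ℕ) (R Rbar : ℕ → ℝ) (a b : ℕ) : Prop :=
  1 ≤ a ∧ a ≤ b ∧ b ≤ n ∧ (∀ i, a ≤ i → i ≤ b → Rbar i ≠ R i) ∧
    (a = 1 ∨ Rbar (a - 1) = R (a - 1)) ∧ (b = n ∨ Rbar (b + 1) = R (b + 1))

/-- The instance is mostly regular w.r.t. cutoffs `cut`, where `Rbar · k` is the
quasi-concave closure of the pseudo-revenues of item `k`:
(1) no partial overlap of candidate ironing intervals of neighboring items;
(2) no candidate ironing interval contains a neighboring cutoff;
(3) not-too-shuffled values on candidate ironing intervals between cutoffs. -/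
def MostlyRegular (d n : ℕ) (θ : ℕ → ℕ → ℝ) (f : ℕ → ℝ) (cut : ℕ → ℕ)
    (Rbar : ℕ → ℕ → ℝ) : Prop :=
  ∀ k, 1 ≤ k → k + 1 ≤ d →
    (∀ a b c e,
      CandInterval n (fun i => pseudoRev n θ f i k) (fun i => Rbar i k) a b →
      CandInterval n (fun i => pseudoRev n θ f i (k + 1)) (fun i => Rbar i (k + 1)) c e →
      (b + 1 < c ∨ e + 1 < a ∨ (c < a ∧ b < e) ∨ (a < c ∧ e < b))) ∧
    (∀ a b,
      (CandInterval n (fun i => pseudoRev n θ f i k) (fun i => Rbar i k) a b ∨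
        CandInterval n (fun i => pseudoRev n θ f i (k + 1)) (fun i => Rbar i (k + 1)) a b) →
      ¬(a ≤ cut k ∧ cut k ≤ b) ∧ ¬(a ≤ cut (k + 1) ∧ cut (k + 1) ≤ b)) ∧
    (∀ a b,
      (CandInterval n (fun i => pseudoRev n θ f i k) (fun i => Rbar i k) a b ∨
        CandInterval n (fun i => pseudoRev n θ f i (k + 1)) (fun i => Rbar i (k + 1)) a b) →
      cut k + 1 ≤ a → b + 1 ≤ cut (k + 1) →
      ∀ i, a ≤ i → i ≤ b → θ a (k + 1) ≤ θ i (k + 1) ∧ θ b k ≤ θ (b + 1) k)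

/-- Allocation of the separate pricing mechanism at prices `p`:
`q_i^k = 1` iff `θ_i^k ≥ p_k` (and `q_0 = 0`). -/
def sepQ (θ : ℕ → ℕ → ℝ) (p : ℕ → ℝ) : ℕ → ℕ → ℝ :=
  fun i k => if i = 0 then 0 else if p k ≤ θ i k then 1 else 0

/-- Transfers of the separate pricing mechanism at prices `p`: `t_i = ∑_{k=1}^d p_k q_i^k`. -/
def sepT (d : ℕ) (θ : ℕ → ℕ → ℝ) (p : ℕ → ℝ) : ℕ → ℝ :=
  fun i => ∑ k ∈ Finset.Icc 1 d, p k * sepQ θ p i k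

/-! Only column `i` of the flow enters `φ_i`, and the update scales the part of that column
coming from above by `γ`; since a downward flow has no other part there (the diagonal entry
is multiplied by `θ_i − θ_i = 0`), `f_i φ_i^{λ'(γ)} = γ f_i φ_i^λ + (1 − γ) f_i θ_i`. The virtual
values of types above `i` only involve columns above `i`, which the update leaves alone. Hence
`R_i^{λ'(γ)}` is the convex combination `γ R_i^λ + (1 − γ) (R_{i+1}^λ + f_i θ_i)`, and its values
for `γ ∈ [0,1]` sweep out the whole segment between the two endpoints. -/

lemma flowRev_eq_add (n : ℕ) (θ : ℕ → ℕ → ℝ) (f : ℕ → ℝ) (lam : ℕ → ℕ → ℝ) {i : ℕ}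
    (hin : i ≤ n) (k : ℕ) :
    flowRev n θ f lam i k = f i * virt n θ f lam i k + flowRev n θ f lam (i + 1) k := by
  rw [flowRev, flowRev, ← add_sum_Ioc_eq_sum_Icc hin, Icc_add_one_left_eq_Ioc]

lemma mul_virt_eq (n : ℕ) (θ : ℕ → ℕ → ℝ) {f : ℕ → ℝ} (lam : ℕ → ℕ → ℝ) {i : ℕ}
    (hfi : f i ≠ 0) (k : ℕ) :
    f i * virt n θ f lam i k = f i * θ i k - ∑ j ∈ Icc 1 n, lam j i * (θ j k - θ i k) := by
  rw [virt]
  field_simp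

lemma NonnegLam.eq_zero_of_downward {n : ℕ} {lam : ℕ → ℕ → ℝ} (hnn : NonnegLam n lam)
    (hdown : Downward n lam) {i j : ℕ} (hi : i ∈ Icc 1 n) (hj : j ∈ Icc 1 n) (hji : j ≤ i) :
    lam j i = 0 := by
  have hi0 : i ∈ Icc 0 n := mem_Icc.mpr ⟨Nat.zero_le i, (mem_Icc.mp hi).2⟩
  refine le_antisymm (not_lt.mp fun hpos => ?_) (hnn j hj i hi0)
  exact absurd (hdown j hj i hi hpos) (not_lt.mpr hji)

section ironUpdate

variable (n : ℕ) (lam : ℕ → ℕ → ℝ) (i : ℕ) (γ : ℝ)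

lemma ironUpdate_apply_of_ne {j r : ℕ} (hri : r ≠ i) (hri' : r ≠ i - 1) :
    ironUpdate n lam i γ j r = lam j r := by
  simp [ironUpdate, hri, hri']

lemma ironUpdate_apply_self {j : ℕ} (hi : 1 ≤ i) :
    ironUpdate n lam i γ j i = if i < j then γ * lam j i else lam j i := by
  unfold ironUpdate
  split_ifs <;> first | rfl | omega

lemma virt_ironUpdate_of_ne (θ : ℕ → ℕ → ℝ) (f : ℕ → ℝ) {j : ℕ} (hji : j ≠ i)
    (hji' : j ≠ i - 1) (k : ℕ) :
    virt n θ f (ironUpdate n lam i γ) j k = virt n θ f lam j k := by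
  simp only [virt, ironUpdate_apply_of_ne n lam i γ hji hji']

lemma flowRev_ironUpdate_succ (θ : ℕ → ℕ → ℝ) (f : ℕ → ℝ) (k : ℕ) :
    flowRev n θ f (ironUpdate n lam i γ) (i + 1) k = flowRev n θ f lam (i + 1) k := by
  refine sum_congr rfl fun j hj => ?_
  have hij : i < j := (mem_Icc.mp hj).1
  rw [virt_ironUpdate_of_ne n lam i γ θ f (by omega) (by omega)]

lemma sum_ironUpdate_self (θ : ℕ → ℕ → ℝ) (k : ℕ) (hi : 1 ≤ i)
    (hbelow : ∀ j ∈ Icc 1 n, j < i → lam j i = 0) :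
    ∑ j ∈ Icc 1 n, ironUpdate n lam i γ j i * (θ j k - θ i k) =
      γ * ∑ j ∈ Icc 1 n, lam j i * (θ j k - θ i k) := by
  rw [mul_sum]
  refine sum_congr rfl fun j hj => ?_
  rw [ironUpdate_apply_self n lam i γ hi]
  rcases lt_trichotomy i j with hij | rfl | hji
  · rw [if_pos hij, mul_assoc]
  · simp
  · rw [if_neg (by omega), hbelow j hj hji]
    ring

theorem flowRev_ironUpdate (θ : ℕ → ℕ → ℝ) {f : ℕ → ℝ} (hfi : f i ≠ 0) (hi : i ∈ Icc 1 n)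
    (hbelow : ∀ j ∈ Icc 1 n, j < i → lam j i = 0) (k : ℕ) :
    flowRev n θ f (ironUpdate n lam i γ) i k =
      γ * flowRev n θ f lam i k + (1 - γ) * (flowRev n θ f lam (i + 1) k + f i * θ i k) := by
  obtain ⟨hi1, hin⟩ := mem_Icc.mp hi
  rw [flowRev_eq_add n θ f _ hin, flowRev_eq_add n θ f _ hin, flowRev_ironUpdate_succ,
    mul_virt_eq n θ _ hfi, mul_virt_eq n θ _ hfi, sum_ironUpdate_self n lam i γ θ k hi1 hbelow]
  ring

end ironUpdate

theorem ironing_gamma_exists_general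
    (n : ℕ)
    (θ : ℕ → ℕ → ℝ) (f : ℕ → ℝ) (hf : IsProb n f)
    (lam : ℕ → ℕ → ℝ) (hnn : NonnegLam n lam) (hdown : Downward n lam)
    (i : ℕ) (hi : i ∈ Finset.Icc 1 n) (k : ℕ) :
    (∃ a b : ℝ, ∀ γ : ℝ, flowRev n θ f (ironUpdate n lam i γ) i k = a * γ + b) ∧
    flowRev n θ f (ironUpdate n lam i 1) i k = flowRev n θ f lam i k ∧
    flowRev n θ f (ironUpdate n lam i 0) i k = flowRev n θ f lam (i + 1) k + f i * θ i k ∧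
    ∀ c : ℝ,
      min (flowRev n θ f lam i k) (flowRev n θ f lam (i + 1) k + f i * θ i k) ≤ c →
      c ≤ max (flowRev n θ f lam i k) (flowRev n θ f lam (i + 1) k + f i * θ i k) →
      ∃ γ ∈ Set.Icc (0 : ℝ) 1, flowRev n θ f (ironUpdate n lam i γ) i k = c := by
  have hbelow : ∀ j ∈ Icc 1 n, j < i → lam j i = 0 := fun j hj hji =>
    hnn.eq_zero_of_downward hdown hi hj hji.le
  have hR (γ : ℝ) := flowRev_ironUpdate n lam i γ θ (hf.1 i hi).ne' hi hbelow k
  set R₁ := flowRev n θ f lam i k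
  set R₀ := flowRev n θ f lam (i + 1) k + f i * θ i k
  refine ⟨⟨R₁ - R₀, R₀, fun γ => by rw [hR]; ring⟩, by simp [hR], by simp [hR],
    fun c hc₁ hc₂ => ?_⟩
  have hc : c ∈ segment ℝ R₀ R₁ := by
    rw [segment_eq_uIcc, Set.uIcc_comm]
    exact ⟨hc₁, hc₂⟩
  obtain ⟨γ, hγ, hγc⟩ := (segment_eq_image ℝ R₀ R₁).subset hc
  exact ⟨γ, hγ, by simp only [hR, ← hγc, smul_eq_mul]; ring⟩

/-- **Induction step of Lemma 6 (existence of the ironing parameter γ)**: for a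
nonnegative downward matrix `λ`, the map `γ ↦ R_i^{λ'(γ),k}` is affine, takes the value
`R_i^{λ,k}` at `γ = 1` and `R_{i+1}^{λ,k} + f_i θ_i^k` at `γ = 0`; hence every value in
between is attained at some `γ ∈ [0,1]`. -/
theorem ironing_gamma_exists
    (d n : ℕ) (hd : 1 ≤ d) (hn : 1 ≤ n)
    (θ : ℕ → ℕ → ℝ) (f : ℕ → ℝ) (hf : IsProb n f)
    (lam : ℕ → ℕ → ℝ) (hnn : NonnegLam n lam) (hdown : Downward n lam)
    (i : ℕ) (hi : i ∈ Finset.Icc 1 n) (k : ℕ) (hk : k ∈ Finset.Icc 1 d) :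
    (∃ a b : ℝ, ∀ γ : ℝ, flowRev n θ f (ironUpdate n lam i γ) i k = a * γ + b) ∧
    flowRev n θ f (ironUpdate n lam i 1) i k = flowRev n θ f lam i k ∧
    flowRev n θ f (ironUpdate n lam i 0) i k = flowRev n θ f lam (i + 1) k + f i * θ i k ∧
    ∀ c : ℝ,
      min (flowRev n θ f lam i k) (flowRev n θ f lam (i + 1) k + f i * θ i k) ≤ c →
      c ≤ max (flowRev n θ f lam i k) (flowRev n θ f lam (i + 1) k + f i * θ i k) →
      ∃ γ ∈ Set.Icc (0 : ℝ) 1, flowRev n θ f (ironUpdate n lam i γ) i k = c :=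
  ironing_gamma_exists_general n θ f hf lam hnn hdown i hi k
end
end

section
/- Theorem 3, second direction (separate pricing implies upgrade pricing under monotone types): Suppose the type space is monotone, and let p ∈ ℝ^d. Then the separate pricing mechanism at p is IC-IR and is an upgrade pricing mechanism; in particular, its allocation is monotone: i ≤ j implies q_i^k ≤ q_j^k for all k ∈ {1,…,d}. -/
open Finset

noncomputable section

theorem dot_sub_sum_mul (d : ℕ) (q v p : ℕ → ℝ) :
    dot d q v - ∑ k ∈ Finset.Icc 1 d, p k * q k = ∑ k ∈ Finset.Icc 1 d, q k * (v k - p k) := by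
  rw [dot, ← Finset.sum_sub_distrib]
  exact Finset.sum_congr rfl fun _ _ => by ring

theorem mul_le_max_zero_of_mem_Icc {x a : ℝ} (hx : x ∈ Set.Icc (0 : ℝ) 1) :
    x * a ≤ max a 0 := by
  obtain ⟨hx0, hx1⟩ := hx
  rcases le_total 0 a with ha | ha
  · rw [max_eq_left ha]; nlinarith
  · rw [max_eq_right ha]; nlinarith

theorem sepQ_mem_Icc (θ : ℕ → ℕ → ℝ) (p : ℕ → ℝ) (i k : ℕ) :
    sepQ θ p i k ∈ Set.Icc (0 : ℝ) 1 := by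
  unfold sepQ
  split_ifs <;> norm_num

theorem sepQ_mul_sub_eq_max (θ : ℕ → ℕ → ℝ) (p : ℕ → ℝ) {i : ℕ} (hi : i ≠ 0) (k : ℕ) :
    sepQ θ p i k * (θ i k - p k) = max (θ i k - p k) 0 := by
  by_cases h : p k ≤ θ i k
  · simp [sepQ, hi, h]
  · simp [sepQ, hi, h, (not_le.mp h).le]

/-- Each type buys exactly the goods whose price it is willing to pay, so it maximises its
utility good by good. -/
theorem sepQ_ICIR (d n : ℕ) (θ : ℕ → ℕ → ℝ) (p : ℕ → ℝ) :
    ICIR d n θ (sepQ θ p) (sepT d θ p) := by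
  intro j hj i _
  have hj0 : j ≠ 0 := Nat.one_le_iff_ne_zero.mp (Finset.mem_Icc.mp hj).1
  rw [ge_iff_le, sepT, sepT, dot_sub_sum_mul, dot_sub_sum_mul]
  refine Finset.sum_le_sum fun k _ => ?_
  rw [sepQ_mul_sub_eq_max θ p hj0]
  exact mul_le_max_zero_of_mem_Icc (sepQ_mem_Icc θ p i k)

theorem sepQ_mono {d n : ℕ} {θ : ℕ → ℕ → ℝ} (hmono : MonotoneTypes d n θ) (p : ℕ → ℝ)
    {i j : ℕ} (hij : i ≤ j) (hjn : j ≤ n) {k : ℕ} (hk : k ∈ Finset.Icc 1 d) :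
    sepQ θ p i k ≤ sepQ θ p j k := by
  rcases Nat.eq_zero_or_pos i with rfl | hi
  · simpa [sepQ] using (sepQ_mem_Icc θ p j k).1
  have hθ : θ i k ≤ θ j k := hmono i (Finset.mem_Icc.mpr ⟨hi, hij.trans hjn⟩)
    j (Finset.mem_Icc.mpr ⟨hi.trans_le hij, hjn⟩) hij k hk
  by_cases hp : p k ≤ θ i k
  · simp [sepQ, hi.ne', (hi.trans_le hij).ne', hp, hp.trans hθ]
  · simpa [sepQ, hi.ne', hp] using (sepQ_mem_Icc θ p j k).1

theorem upgradePricing_of_monotone {d n : ℕ} {q : ℕ → ℕ → ℝ}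
    (hq : ∀ i j, i ≤ j → j ≤ n → ∀ k ∈ Finset.Icc 1 d, q i k ≤ q j k) :
    UpgradePricing d n q := by
  intro i hi j hj
  rcases le_total i j with hij | hji
  · exact Or.inl (hq i j hij (Finset.mem_Icc.mp hj).2)
  · exact Or.inr (hq j i hji (Finset.mem_Icc.mp hi).2)

theorem separate_is_upgrade_general
    (d n : ℕ)
    (θ : ℕ → ℕ → ℝ)
    (hmono : MonotoneTypes d n θ) (p : ℕ → ℝ) :
    ICIR d n θ (sepQ θ p) (sepT d θ p) ∧
    UpgradePricing d n (sepQ θ p) ∧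
    ∀ i ∈ Finset.Icc 1 n, ∀ j ∈ Finset.Icc 1 n, i ≤ j →
      ∀ k ∈ Finset.Icc 1 d, sepQ θ p i k ≤ sepQ θ p j k :=
  ⟨sepQ_ICIR d n θ p,
    upgradePricing_of_monotone fun _ _ hij hjn _ hk => sepQ_mono hmono p hij hjn hk,
    fun _ _ _ hj hij _ hk => sepQ_mono hmono p hij (Finset.mem_Icc.mp hj).2 hk⟩

/-- **Theorem 3, second direction**: under monotone types, the separate pricing mechanism
at any price vector `p` is IC-IR and is an upgrade pricing mechanism; in particular its
allocation is monotone in the type index. -/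
theorem separate_is_upgrade
    (d n : ℕ) (hd : 1 ≤ d) (hn : 1 ≤ n)
    (θ : ℕ → ℕ → ℝ) (hθ : ∀ i ∈ Finset.Icc 1 n, ∀ k ∈ Finset.Icc 1 d, 0 ≤ θ i k)
    (f : ℕ → ℝ) (hf : IsProb n f)
    (hmono : MonotoneTypes d n θ) (p : ℕ → ℝ) :
    ICIR d n θ (sepQ θ p) (sepT d θ p) ∧
    UpgradePricing d n (sepQ θ p) ∧
    ∀ i ∈ Finset.Icc 1 n, ∀ j ∈ Finset.Icc 1 n, i ≤ j →
      ∀ k ∈ Finset.Icc 1 d, sepQ θ p i k ≤ sepQ θ p j k :=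
  separate_is_upgrade_general d n θ hmono p
end
end

section
/- Corollary 1: Suppose the type space is monotone. Let (q,t) be an optimal IC-IR upgrade pricing mechanism with deterministic allocations q_i ∈ {0,1}^d, and suppose there exists p* ∈ ℝ^d such that for each k, p*_k maximizes the single-item revenue p · Σ_{i : θ_i^k ≥ p} f_i over p ∈ ℝ, and q_i^k = 1 if and only if θ_i^k ≥ p*_k for all i, k (i.e., q is the allocation of separate monopoly pricing). Then the separate pricing mechanism at p* is optimal. -/
/-! Chaining the downward adjacent IC constraints, type `i` pays at most
`∑_{j ≤ i} ⟨q_j - q_{j-1}, θ_j⟩`. Under the separate monopoly allocation and monotone types,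
good `k` enters this sum once, at the first type `c` with `θ_c^k ≥ p*_k`, and the types buying
it are exactly those valuing it at least `θ_c^k`. Summing over types, good `k` contributes at
most the single-item revenue at price `θ_c^k`, hence at most the one at `p*_k`. So no mechanism
beats separate pricing at `p*`, which is itself IC-IR. -/

open Finset

noncomputable section

def itemRevenue (n : ℕ) (θ : ℕ → ℕ → ℝ) (f : ℕ → ℝ) (k : ℕ) (x : ℝ) : ℝ :=
  x * ∑ i ∈ (Icc 1 n).filter (fun i => x ≤ θ i k), f i

section SeparatePricing

variable {d n : ℕ} {θ : ℕ → ℕ → ℝ} {f : ℕ → ℝ} {p : ℕ → ℝ}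

lemma sepQ_nonneg (i k : ℕ) : 0 ≤ sepQ θ p i k := by
  unfold sepQ; split_ifs <;> norm_num

lemma sepQ_le_one (i k : ℕ) : sepQ θ p i k ≤ 1 := by
  unfold sepQ; split_ifs <;> norm_num

lemma sepQ_eq_zero_of_not {i k : ℕ} (h : ¬(i ≠ 0 ∧ p k ≤ θ i k)) : sepQ θ p i k = 0 := by
  unfold sepQ; split_ifs <;> tauto

lemma isMechanism_sep : IsMechanism d n (sepQ θ p) (sepT d θ p) :=
  ⟨fun _ _ => by simp [sepQ], by simp [sepT, sepQ],
    fun _ _ _ _ => ⟨sepQ_nonneg _ _, sepQ_le_one _ _⟩⟩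

lemma dot_sepQ_sub_sepT (m j : ℕ) :
    dot d (sepQ θ p m) (θ j) - sepT d θ p m =
      ∑ k ∈ Icc 1 d, sepQ θ p m k * (θ j k - p k) := by
  rw [dot, sepT, ← sum_sub_distrib]
  exact sum_congr rfl fun _ _ => by ring

-- Good by good, buying exactly when `θ_j^k ≥ p_k` maximizes `s (θ_j^k - p_k)` over `s ∈ [0,1]`.
lemma icir_sep : ICIR d n θ (sepQ θ p) (sepT d θ p) := by
  intro j hj i _
  have hj0 : j ≠ 0 := by rw [mem_Icc] at hj; omega
  rw [ge_iff_le, dot_sepQ_sub_sepT, dot_sepQ_sub_sepT]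
  refine sum_le_sum fun k _ => ?_
  have h0 := sepQ_nonneg (θ := θ) (p := p) i k
  have h1 := sepQ_le_one (θ := θ) (p := p) i k
  rw [show sepQ θ p j k = if p k ≤ θ j k then 1 else 0 from if_neg hj0]
  split_ifs <;> nlinarith

lemma revenue_sepT : revenue n f (sepT d θ p) = ∑ k ∈ Icc 1 d, itemRevenue n θ f k (p k) := by
  simp only [revenue, sepT, itemRevenue, mul_sum, sum_filter]
  rw [sum_comm]
  refine sum_congr rfl fun k _ => sum_congr rfl fun i hi => ?_
  have hi0 : i ≠ 0 := by rw [mem_Icc] at hi; omega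
  simp only [sepQ, hi0, if_false]
  split_ifs <;> ring

end SeparatePricing

section IncentiveCompatibility

variable {d n : ℕ} {θ : ℕ → ℕ → ℝ} {q : ℕ → ℕ → ℝ} {f t : ℕ → ℝ}

lemma ICIR.congr {q' : ℕ → ℕ → ℝ} (hq : ∀ i ≤ n, ∀ k ∈ Icc 1 d, q i k = q' i k)
    (hic : ICIR d n θ q t) : ICIR d n θ q' t := by
  have hdot : ∀ i ≤ n, ∀ j, dot d (q i) (θ j) = dot d (q' i) (θ j) := fun i hi j =>
    sum_congr rfl fun k hk => by rw [hq i hi k hk]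
  intro j hj i hi
  rw [← hdot j (mem_Icc.mp hj).2, ← hdot i (mem_Icc.mp hi).2]
  exact hic j hj i hi

lemma ICIR.transfer_le_sum (hic : ICIR d n θ q t) (ht0 : t 0 = 0) :
    ∀ i ≤ n, t i ≤ ∑ j ∈ range i, (dot d (q (j + 1)) (θ (j + 1)) - dot d (q j) (θ (j + 1))) := by
  intro i
  induction i with
  | zero => simp [ht0]
  | succ m ih =>
    intro hm
    have hstep := hic (m + 1) (mem_Icc.mpr ⟨by omega, hm⟩) m (mem_Icc.mpr ⟨by omega, by omega⟩)
    rw [sum_range_succ]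
    linarith [ih (by omega)]

lemma ICIR.revenue_le (hic : ICIR d n θ q t) (ht0 : t 0 = 0) (hf : ∀ i ∈ Icc 1 n, 0 ≤ f i) :
    revenue n f t ≤ ∑ j ∈ range n,
      (∑ i ∈ Icc (j + 1) n, f i) * (dot d (q (j + 1)) (θ (j + 1)) - dot d (q j) (θ (j + 1))) := by
  calc revenue n f t
      ≤ ∑ i ∈ Icc 1 n, f i *
          ∑ j ∈ range i, (dot d (q (j + 1)) (θ (j + 1)) - dot d (q j) (θ (j + 1))) :=
        sum_le_sum fun i hi =>
          mul_le_mul_of_nonneg_left (hic.transfer_le_sum ht0 i (mem_Icc.mp hi).2) (hf i hi)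
    _ = _ := by
        simp only [mul_sum, sum_mul]
        refine sum_comm' fun i j => ?_
        simp only [mem_Icc, mem_range]
        omega

end IncentiveCompatibility

section MonopolyPricing

variable {d n : ℕ} {θ : ℕ → ℕ → ℝ} {f t : ℕ → ℝ} {p : ℕ → ℝ} {j k : ℕ}

lemma MonotoneTypes.filter_le_eq_Icc (hmono : MonotoneTypes d n θ) (hk : k ∈ Icc 1 d)
    (hj : j < n) {x : ℝ} (hbuy : x ≤ θ (j + 1) k) (hfirst : j = 0 ∨ θ j k < x) :
    (Icc 1 n).filter (fun i => θ (j + 1) k ≤ θ i k) = Icc (j + 1) n := by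
  ext i
  simp only [mem_filter, mem_Icc]
  constructor
  · rintro ⟨⟨hi1, hin⟩, hle⟩
    refine ⟨?_, hin⟩
    by_contra! hij
    have hθ := hmono i (mem_Icc.mpr ⟨hi1, hin⟩) j (mem_Icc.mpr ⟨by omega, by omega⟩) (by omega) k hk
    rcases hfirst with h0 | hlt
    · omega
    · linarith
  · rintro ⟨hji, hin⟩
    exact ⟨⟨by omega, hin⟩,
      hmono (j + 1) (mem_Icc.mpr ⟨by omega, by omega⟩) i (mem_Icc.mpr ⟨by omega, hin⟩) hji k hk⟩

lemma MonotoneTypes.sepQ_le_sepQ_succ (hmono : MonotoneTypes d n θ) (hk : k ∈ Icc 1 d)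
    (hj : j < n) : sepQ θ p j k ≤ sepQ θ p (j + 1) k := by
  by_cases hprev : j ≠ 0 ∧ p k ≤ θ j k
  · have hθ := hmono j (mem_Icc.mpr ⟨by omega, by omega⟩) (j + 1)
      (mem_Icc.mpr ⟨by omega, by omega⟩) (by omega) k hk
    have hcur : p k ≤ θ (j + 1) k := hprev.2.trans hθ
    simp [sepQ, hprev.1, hprev.2, hcur]
  · exact (sepQ_eq_zero_of_not hprev).trans_le (sepQ_nonneg _ _)

lemma MonotoneTypes.sepQ_step_mul_le (hmono : MonotoneTypes d n θ) (hk : k ∈ Icc 1 d)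
    (hj : j < n) (hmax : ∀ x, itemRevenue n θ f k x ≤ itemRevenue n θ f k (p k)) :
    (sepQ θ p (j + 1) k - sepQ θ p j k) * (θ (j + 1) k * ∑ i ∈ Icc (j + 1) n, f i) ≤
      (sepQ θ p (j + 1) k - sepQ θ p j k) * itemRevenue n θ f k (p k) := by
  by_cases hbuy : p k ≤ θ (j + 1) k
  · by_cases hprev : j ≠ 0 ∧ p k ≤ θ j k
    · simp [sepQ, hbuy, hprev.1, hprev.2]
    · have hfirst : j = 0 ∨ θ j k < p k := by
        by_contra! h
        exact hprev ⟨h.1, h.2⟩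
      rw [show sepQ θ p (j + 1) k = 1 by simp [sepQ, hbuy], sepQ_eq_zero_of_not hprev,
        sub_zero, one_mul, one_mul, ← hmono.filter_le_eq_Icc hk hj hbuy hfirst]
      exact hmax (θ (j + 1) k)
  · have hcur : sepQ θ p (j + 1) k = 0 := sepQ_eq_zero_of_not fun h => hbuy h.2
    have hprev : sepQ θ p j k = 0 :=
      le_antisymm (hcur ▸ hmono.sepQ_le_sepQ_succ hk hj) (sepQ_nonneg _ _)
    simp [hcur, hprev]

lemma MonotoneTypes.revenue_le_revenue_sepT (hmono : MonotoneTypes d n θ)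
    (hf : ∀ i ∈ Icc 1 n, 0 ≤ f i) (ht0 : t 0 = 0) (hic : ICIR d n θ (sepQ θ p) t)
    (hmax : ∀ k ∈ Icc 1 d, ∀ x, itemRevenue n θ f k x ≤ itemRevenue n θ f k (p k)) :
    revenue n f t ≤ revenue n f (sepT d θ p) := by
  calc revenue n f t
      ≤ ∑ j ∈ range n, (∑ i ∈ Icc (j + 1) n, f i) *
          (dot d (sepQ θ p (j + 1)) (θ (j + 1)) - dot d (sepQ θ p j) (θ (j + 1))) :=
        hic.revenue_le ht0 hf
    _ = ∑ k ∈ Icc 1 d, ∑ j ∈ range n, (sepQ θ p (j + 1) k - sepQ θ p j k) *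
          (θ (j + 1) k * ∑ i ∈ Icc (j + 1) n, f i) := by
        refine (sum_congr rfl fun j _ => ?_).trans sum_comm
        rw [dot, dot, ← sum_sub_distrib, mul_sum]
        exact sum_congr rfl fun _ _ => by ring
    _ ≤ ∑ k ∈ Icc 1 d, ∑ j ∈ range n,
          (sepQ θ p (j + 1) k - sepQ θ p j k) * itemRevenue n θ f k (p k) :=
        sum_le_sum fun k hk => sum_le_sum fun j hj =>
          hmono.sepQ_step_mul_le hk (mem_range.mp hj) (hmax k hk)
    _ = ∑ k ∈ Icc 1 d, sepQ θ p n k * itemRevenue n θ f k (p k) := by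
        refine sum_congr rfl fun k _ => ?_
        rw [← sum_mul, sum_range_sub (fun j => sepQ θ p j k),
          show sepQ θ p 0 k = 0 from if_pos rfl, sub_zero]
    _ ≤ ∑ k ∈ Icc 1 d, itemRevenue n θ f k (p k) :=
        sum_le_sum fun k hk => mul_le_of_le_one_left (by simpa [itemRevenue] using hmax k hk 0)
          (sepQ_le_one _ _)
    _ = revenue n f (sepT d θ p) := revenue_sepT.symm

end MonopolyPricing

lemma eq_sepQ_of_deterministic {d n : ℕ} {θ q : ℕ → ℕ → ℝ} {p : ℕ → ℝ}
    (hq0 : ∀ k ∈ Icc 1 d, q 0 k = 0)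
    (hdet : ∀ i ∈ Icc 1 n, ∀ k ∈ Icc 1 d, q i k = 0 ∨ q i k = 1)
    (halloc : ∀ i ∈ Icc 1 n, ∀ k ∈ Icc 1 d, (q i k = 1 ↔ p k ≤ θ i k)) :
    ∀ i ≤ n, ∀ k ∈ Icc 1 d, q i k = sepQ θ p i k := by
  intro i hin k hk
  rcases Nat.eq_zero_or_pos i with rfl | hi0
  · simp [sepQ, hq0 k hk]
  have hi : i ∈ Icc 1 n := mem_Icc.mpr ⟨hi0, hin⟩
  simp only [sepQ, hi0.ne', if_false]
  split_ifs with hbuy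
  · exact (halloc i hi k hk).mpr hbuy
  · exact (hdet i hi k hk).resolve_right fun h => hbuy ((halloc i hi k hk).mp h)

theorem separate_monopoly_pricing_optimal_general
    (d n : ℕ)
    (θ : ℕ → ℕ → ℝ)
    (f : ℕ → ℝ) (hf : IsProb n f)
    (hmono : MonotoneTypes d n θ)
    (q : ℕ → ℕ → ℝ) (t : ℕ → ℝ)
    (hdet : ∀ i ∈ Finset.Icc 1 n, ∀ k ∈ Finset.Icc 1 d, q i k = 0 ∨ q i k = 1)
    (hopt : Optimal d n θ f q t)
    (pstar : ℕ → ℝ)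
    (hpmax : ∀ k ∈ Finset.Icc 1 d, ∀ p : ℝ,
      p * (∑ i ∈ (Finset.Icc 1 n).filter (fun i => p ≤ θ i k), f i) ≤
        pstar k * (∑ i ∈ (Finset.Icc 1 n).filter (fun i => pstar k ≤ θ i k), f i))
    (halloc : ∀ i ∈ Finset.Icc 1 n, ∀ k ∈ Finset.Icc 1 d,
      (q i k = 1 ↔ pstar k ≤ θ i k)) :
    Optimal d n θ f (sepQ θ pstar) (sepT d θ pstar) := by
  obtain ⟨⟨hq0, ht0, -⟩, hic, hbest⟩ := hopt
  have hic_sep : ICIR d n θ (sepQ θ pstar) t :=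
    hic.congr (eq_sepQ_of_deterministic hq0 hdet halloc)
  have hrev : revenue n f t ≤ revenue n f (sepT d θ pstar) :=
    hmono.revenue_le_revenue_sepT (fun i hi => (hf.1 i hi).le) ht0 hic_sep hpmax
  exact ⟨isMechanism_sep, icir_sep, fun q' t' hmech hic' => (hbest q' t' hmech hic').trans hrev⟩

/-- **Corollary 1**: under monotone types, if an optimal IC-IR deterministic upgrade
pricing mechanism has the allocation of separate monopoly pricing at prices `p*` (each
`p*_k` maximizing the single-item revenue), then the separate pricing mechanism at `p*`
is optimal. -/
theorem separate_monopoly_pricing_optimal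
    (d n : ℕ) (hd : 1 ≤ d) (hn : 1 ≤ n)
    (θ : ℕ → ℕ → ℝ) (hθ : ∀ i ∈ Finset.Icc 1 n, ∀ k ∈ Finset.Icc 1 d, 0 ≤ θ i k)
    (f : ℕ → ℝ) (hf : IsProb n f)
    (hmono : MonotoneTypes d n θ)
    (q : ℕ → ℕ → ℝ) (t : ℕ → ℝ)
    (hdet : ∀ i ∈ Finset.Icc 1 n, ∀ k ∈ Finset.Icc 1 d, q i k = 0 ∨ q i k = 1)
    (hup : UpgradePricing d n q)
    (hopt : Optimal d n θ f q t)
    (pstar : ℕ → ℝ)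
    (hpmax : ∀ k ∈ Finset.Icc 1 d, ∀ p : ℝ,
      p * (∑ i ∈ (Finset.Icc 1 n).filter (fun i => p ≤ θ i k), f i) ≤
        pstar k * (∑ i ∈ (Finset.Icc 1 n).filter (fun i => pstar k ≤ θ i k), f i))
    (halloc : ∀ i ∈ Finset.Icc 1 n, ∀ k ∈ Finset.Icc 1 d,
      (q i k = 1 ↔ pstar k ≤ θ i k)) :
    Optimal d n θ f (sepQ θ pstar) (sepT d θ pstar) :=
  separate_monopoly_pricing_optimal_general d n θ f hf hmono q t hdet hopt pstar hpmax halloc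
end
end
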